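/- arXiv:1412.2801 — 3 statements merged into one kernel-verified Lean document; each statement's English description precedes it below -/
import Mathlib

section
/- Every automorphism of the real quaternion algebra ℍ is inner; that is, for every ℝ-algebra automorphism φ of ℍ there exists a nonzero quaternion σ such that φ(q) = σ⁻¹ q σ for all q ∈ ℍ. -/
open Quaternion

/-!
Let `φ` be an automorphism of `ℍ`. Averaging over the quaternion group `{±1, ±i, ±j, ±k}`, the
map `T x = x - i x φ(i) - j x φ(j) - k x φ(k)` takes values in the intertwiners:
`i T(x) = T(x) φ(i)`, and likewise for `j` and `k`, hence `q T(x) = T(x) φ(q)` for every `q`.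
Since `T 1 - i T(i) - j T(j) - k T(k) = 4`, some `T x` is nonzero, so invertible in the division
ring `ℍ`, and it conjugates the identity into `φ`.
-/

namespace QuaternionAlgebra.Basis

variable {R B : Type*} [CommRing R] [Ring B] [Algebra R B]

section Hamilton

variable (p : Basis B (-1 : R) 0 (-1)) (x : B)

theorem i_mul_i_mul : p.i * (p.i * x) = -x := by rw [← mul_assoc]; simp
theorem i_mul_j_mul : p.i * (p.j * x) = p.k * x := by rw [← mul_assoc]; simp
theorem i_mul_k_mul : p.i * (p.k * x) = -(p.j * x) := by rw [← mul_assoc]; simp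
theorem j_mul_i_mul : p.j * (p.i * x) = -(p.k * x) := by rw [← mul_assoc]; simp
theorem j_mul_j_mul : p.j * (p.j * x) = -x := by rw [← mul_assoc]; simp
theorem j_mul_k_mul : p.j * (p.k * x) = p.i * x := by rw [← mul_assoc]; simp
theorem k_mul_i_mul : p.k * (p.i * x) = p.j * x := by rw [← mul_assoc]; simp
theorem k_mul_j_mul : p.k * (p.j * x) = -(p.i * x) := by rw [← mul_assoc]; simp
theorem k_mul_k_mul : p.k * (p.k * x) = -x := by rw [← mul_assoc]; simp

end Hamilton

variable (p q : Basis B (-1 : R) 0 (-1)) (x : B)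

/-- `∑ g ∈ {1, i, j, k}, p(g) x q(g)⁻¹`, using `q(g)⁻¹ = -q(g)` for `g ≠ 1`. -/
def intertwiner : B := x - p.i * x * q.i - p.j * x * q.j - p.k * x * q.k

theorem i_mul_intertwiner : p.i * p.intertwiner q x = p.intertwiner q x * q.i := by
  simp only [intertwiner, mul_sub, sub_mul, mul_assoc, i_mul_i_mul, i_mul_j_mul, i_mul_k_mul,
    i_mul_i, j_mul_i, k_mul_i, neg_smul, one_smul, zero_smul, add_zero, zero_sub, mul_neg,
    mul_one, neg_neg, sub_neg_eq_add]
  abel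

theorem j_mul_intertwiner : p.j * p.intertwiner q x = p.intertwiner q x * q.j := by
  simp only [intertwiner, mul_sub, sub_mul, mul_assoc, j_mul_i_mul, j_mul_j_mul, j_mul_k_mul,
    i_mul_j, j_mul_j, k_mul_j, neg_smul, one_smul, mul_neg, mul_one, sub_neg_eq_add]
  abel

theorem k_mul_intertwiner : p.k * p.intertwiner q x = p.intertwiner q x * q.k := by
  rw [← p.i_mul_j, ← q.i_mul_j, mul_assoc, j_mul_intertwiner, ← mul_assoc, i_mul_intertwiner,
    mul_assoc]

theorem intertwiner_one_sub : p.intertwiner q 1 - p.i * p.intertwiner q p.i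
    - p.j * p.intertwiner q p.j - p.k * p.intertwiner q p.k = 4 := by
  simp only [intertwiner, mul_sub, mul_neg, neg_mul, one_mul, mul_one, mul_assoc, i_mul_j_mul,
    i_mul_k_mul, j_mul_i_mul, j_mul_k_mul, k_mul_i_mul, k_mul_j_mul, i_mul_i, j_mul_j, k_mul_k,
    neg_smul, one_smul, zero_smul, add_zero, neg_neg]
  abel_nf
  norm_num

theorem exists_intertwiner_ne_zero (h4 : (4 : B) ≠ 0) : ∃ x, p.intertwiner q x ≠ 0 := by
  by_contra! h
  simp [← p.intertwiner_one_sub q, h] at h4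

theorem lift_mul_eq_mul_lift {σ : B} (hi : p.i * σ = σ * q.i) (hj : p.j * σ = σ * q.j)
    (z : ℍ[R,-1,0,-1]) : p.lift z * σ = σ * q.lift z := by
  have hk : p.k * σ = σ * q.k := by
    rw [← p.i_mul_j, ← q.i_mul_j, mul_assoc, hj, ← mul_assoc, hi, mul_assoc]
  simp only [lift, add_mul, mul_add, smul_mul_assoc, mul_smul_comm, hi, hj, hk, Algebra.commutes]

end QuaternionAlgebra.Basis

namespace Quaternion

open QuaternionAlgebra

variable {R B : Type*} [CommRing R]

theorem exists_ne_zero_forall_mul_eq_mul [Ring B] [Algebra R B] (f g : ℍ[R] →ₐ[R] B)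
    (h4 : (4 : B) ≠ 0) : ∃ σ : B, σ ≠ 0 ∧ ∀ z, f z * σ = σ * g z := by
  let p := (Basis.self R).compHom f
  let q := (Basis.self R).compHom g
  obtain ⟨x, hx⟩ := p.exists_intertwiner_ne_zero q h4
  refine ⟨p.intertwiner q x, hx, fun z => ?_⟩
  have hf : p.lift z = f z := DFunLike.congr_fun (lift.apply_symm_apply f) z
  have hg : q.lift z = g z := DFunLike.congr_fun (lift.apply_symm_apply g) z
  rw [← hf, ← hg]
  exact p.lift_mul_eq_mul_lift q (p.i_mul_intertwiner q x) (p.j_mul_intertwiner q x) z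

theorem exists_ne_zero_forall_eq_inv_mul_mul [DivisionRing B] [Algebra R B] (f g : ℍ[R] →ₐ[R] B)
    (h4 : (4 : B) ≠ 0) : ∃ σ : B, σ ≠ 0 ∧ ∀ z, g z = σ⁻¹ * f z * σ := by
  obtain ⟨σ, hσ, h⟩ := exists_ne_zero_forall_mul_eq_mul f g h4
  exact ⟨σ, hσ, fun z => by rw [mul_assoc, h, inv_mul_cancel_left₀ hσ]⟩

end Quaternion

theorem skolem_noether_quaternions
    (φ : ℍ[ℝ] ≃ₐ[ℝ] ℍ[ℝ]) :
    ∃ σ : ℍ[ℝ], σ ≠ 0 ∧ ∀ q : ℍ[ℝ], φ q = σ⁻¹ * q * σ := by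
  have h4 : (4 : ℍ[ℝ]) ≠ 0 := by
    rw [← map_ofNat (algebraMap ℝ ℍ[ℝ])]
    exact (map_ne_zero _).2 four_ne_zero
  exact exists_ne_zero_forall_eq_inv_mul_mul (AlgHom.id ℝ ℍ[ℝ]) φ.toAlgHom h4
end

section
/- Every involutive ℝ-algebra automorphism of ℍ is either the identity or is of the form q ↦ τ⁻¹ q τ for some pure quaternion τ with τ² = -1. -/
/-!
Every `ℝ`-algebra endomorphism `φ` of `ℍ` is inner. The Casimir element
`1 ⊗ 1 - i ⊗ i - j ⊗ j - k ⊗ k` of `ℍ` intertwines left multiplication by `x` with right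
multiplication by `x`, so every `u = p - i p φ(i) - j p φ(j) - k p φ(k)` satisfies
`x u = u φ(x)`; these `u` cannot all vanish, so `φ = u⁻¹ (·) u` with `u ≠ 0`.
If `φ` is an involution, `u²` is central, hence real, and a quaternion with real square is either
real (then `φ = id`) or pure (then `u / ‖u‖` is the required `τ`).
-/

open Quaternion

namespace QuaternionAlgebra.Basis

variable {A : Type*} [Ring A] [Algebra ℝ A] (b b' : Basis A (-1 : ℝ) 0 (-1))

def casimir (p : A) : A := p - b.i * p * b'.i - b.j * p * b'.j - b.k * p * b'.k

theorem i_mul_casimir (p : A) : b.i * b.casimir b' p = b.casimir b' p * b'.i := by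
  have hl : b.i * b.casimir b' p =
      b.i * p - (b.i * b.i) * p * b'.i - (b.i * b.j) * p * b'.j - (b.i * b.k) * p * b'.k := by
    simp only [casimir]; noncomm_ring
  have hr : b.casimir b' p * b'.i =
      p * b'.i - b.i * p * (b'.i * b'.i) - b.j * p * (b'.j * b'.i) - b.k * p * (b'.k * b'.i) := by
    simp only [casimir]; noncomm_ring
  rw [hl, hr]
  simp only [i_mul_i, neg_smul, one_smul, zero_smul, add_zero, neg_mul, one_mul, sub_neg_eq_add,
    i_mul_j, i_mul_k, mul_neg, mul_one, j_mul_i, zero_sub, k_mul_i, neg_neg]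
  noncomm_ring

theorem j_mul_casimir (p : A) : b.j * b.casimir b' p = b.casimir b' p * b'.j := by
  have hl : b.j * b.casimir b' p =
      b.j * p - (b.j * b.i) * p * b'.i - (b.j * b.j) * p * b'.j - (b.j * b.k) * p * b'.k := by
    simp only [casimir]; noncomm_ring
  have hr : b.casimir b' p * b'.j =
      p * b'.j - b.i * p * (b'.i * b'.j) - b.j * p * (b'.j * b'.j) - b.k * p * (b'.k * b'.j) := by
    simp only [casimir]; noncomm_ring
  rw [hl, hr]
  simp only [j_mul_i, zero_smul, zero_sub, neg_mul, sub_neg_eq_add, j_mul_j, neg_smul, one_smul,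
    one_mul, j_mul_k, mul_neg, mul_one, neg_zero, zero_add, i_mul_j, k_mul_j]
  noncomm_ring

theorem k_mul_casimir (p : A) : b.k * b.casimir b' p = b.casimir b' p * b'.k := by
  rw [← b.i_mul_j, ← b'.i_mul_j, mul_assoc, j_mul_casimir, ← mul_assoc, i_mul_casimir, mul_assoc]

theorem lift_mul_casimir (x : ℍ[ℝ]) (p : A) :
    b.lift x * b.casimir b' p = b.casimir b' p * b'.lift x := by
  simp only [lift, add_mul, mul_add, smul_mul_assoc, mul_smul_comm, i_mul_casimir, j_mul_casimir,
    k_mul_casimir, Algebra.commutes]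

theorem casimir_one_sub_mul_casimir_eq_four :
    b.casimir b' 1 - b.i * b.casimir b' b.i - b.j * b.casimir b' b.j - b.k * b.casimir b' b.k
      = 4 := by
  simp only [casimir, mul_sub, ← mul_assoc]
  simp only [mul_one, i_mul_i, neg_smul, one_smul, zero_smul, add_zero, neg_mul, one_mul,
    sub_neg_eq_add, i_mul_j, k_mul_i, neg_neg, i_mul_k, j_mul_i, zero_sub,
    sub_sub_sub_cancel_right, j_mul_j, k_mul_j, j_mul_k, mul_neg, neg_zero, zero_add, k_mul_k]
  noncomm_ring
  norm_num

theorem exists_casimir_ne_zero [Nontrivial A] : ∃ p, b.casimir b' p ≠ 0 := by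
  by_contra! h
  have h4 := b.casimir_one_sub_mul_casimir_eq_four b'
  simp only [h, mul_zero, sub_zero] at h4
  have : algebraMap ℝ A 4 = algebraMap ℝ A 0 := by rw [map_ofNat, map_zero, h4]
  exact four_ne_zero ((algebraMap ℝ A).injective this)

end QuaternionAlgebra.Basis

namespace Quaternion

open QuaternionAlgebra

theorem lift_lift_symm_apply {A : Type*} [Ring A] [Algebra ℝ A] (f : ℍ[ℝ] →ₐ[ℝ] A) (x : ℍ[ℝ]) :
    (lift.symm f).lift x = f x :=
  DFunLike.congr_fun (lift.apply_symm_apply f) x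

theorem skolem_noether (φ : ℍ[ℝ] →ₐ[ℝ] ℍ[ℝ]) : ∃ u ≠ 0, ∀ q, φ q = u⁻¹ * q * u := by
  set b := lift.symm (AlgHom.id ℝ ℍ[ℝ])
  set b' := lift.symm φ
  obtain ⟨p, hp⟩ := b.exists_casimir_ne_zero b'
  refine ⟨b.casimir b' p, hp, fun q => ?_⟩
  have h := b.lift_mul_casimir b' q p
  rw [lift_lift_symm_apply, lift_lift_symm_apply, AlgHom.id_apply] at h
  rw [mul_assoc, h, ← mul_assoc, inv_mul_cancel₀ hp, one_mul]

section Field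

variable {R : Type*} [Field R] [CharZero R]

theorem eq_re_of_forall_mul_comm {z : ℍ[R]} (h : ∀ q, z * q = q * z) : z = z.re := by
  -- `i` and `j` are named so that they are typed `ℍ[R]`: a bare `⟨0, 1, 0, 0⟩` is typed
  -- `ℍ[R,-1,0,-1]`, where the `Quaternion` simp lemmas do not apply.
  obtain ⟨i, hi⟩ : ∃ i : ℍ[R], i.re = 0 ∧ i.imI = 1 ∧ i.imJ = 0 ∧ i.imK = 0 :=
    ⟨⟨0, 1, 0, 0⟩, rfl, rfl, rfl, rfl⟩
  obtain ⟨j, hj⟩ : ∃ j : ℍ[R], j.re = 0 ∧ j.imI = 0 ∧ j.imJ = 1 ∧ j.imK = 0 :=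
    ⟨⟨0, 0, 1, 0⟩, rfl, rfl, rfl, rfl⟩
  have hzi := h i
  have hzj := h j
  simp only [Quaternion.ext_iff, re_mul, imI_mul, imJ_mul, imK_mul, hi, hj] at hzi hzj
  ext <;> simp only [re_coe, imI_coe, imJ_coe, imK_coe]
  · linear_combination hzj.2.2.2 / 2
  · linear_combination -hzi.2.2.2 / 2
  · linear_combination hzi.2.2.1 / 2

theorem eq_re_or_re_eq_zero_of_sq_eq_re {u : ℍ[R]} (h : u ^ 2 = (u ^ 2).re) :
    u = u.re ∨ u.re = 0 := by
  simp only [Quaternion.ext_iff, sq, re_mul, imI_mul, imJ_mul, imK_mul, re_coe, imI_coe, imJ_coe,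
    imK_coe] at h
  obtain ⟨-, hI, hJ, hK⟩ := h
  by_cases hre : u.re = 0
  · exact .inr hre
  left
  ext <;> simp only [re_coe, imI_coe, imJ_coe, imK_coe]
  · exact (mul_eq_zero.mp (by linear_combination hI / 2 : u.re * u.imI = 0)).resolve_left hre
  · exact (mul_eq_zero.mp (by linear_combination hJ / 2 : u.re * u.imJ = 0)).resolve_left hre
  · exact (mul_eq_zero.mp (by linear_combination hK / 2 : u.re * u.imK = 0)).resolve_left hre

end Field

theorem sq_inv_norm_smul_eq_neg_one {u : ℍ[ℝ]} (hre : u.re = 0) (hu : u ≠ 0) :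
    (‖u‖⁻¹ • u) ^ 2 = -1 := by
  have hτ : (‖u‖⁻¹ • u).re = 0 := by simp [hre]
  rw [sq_eq_neg_normSq.mpr hτ, normSq_eq_norm_mul_self, norm_smul, norm_inv, norm_norm,
    inv_mul_cancel₀ (norm_ne_zero_iff.mpr hu)]
  simp

theorem inv_smul_mul_mul_smul {u : ℍ[ℝ]} {c : ℝ} (hc : c ≠ 0) (q : ℍ[ℝ]) :
    (c • u)⁻¹ * q * (c • u) = u⁻¹ * q * u := by
  simp only [smul_inv₀, smul_mul_assoc, mul_smul_comm, smul_smul, mul_inv_cancel₀ hc, one_smul]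

end Quaternion

theorem involutive_automorphism_classification
    (φ : ℍ[ℝ] ≃ₐ[ℝ] ℍ[ℝ]) (hinv : ∀ q, φ (φ q) = q) :
    (∀ q, φ q = q) ∨
      ∃ τ : ℍ[ℝ], τ.re = 0 ∧ τ ^ 2 = -1 ∧ ∀ q : ℍ[ℝ], φ q = τ⁻¹ * q * τ := by
  obtain ⟨u, hu, hφ⟩ : ∃ u ≠ 0, ∀ q, φ q = u⁻¹ * q * u := skolem_noether φ.toAlgHom
  have hcentral : ∀ q, u ^ 2 * q = q * u ^ 2 := by
    intro q
    have h := hinv q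
    rw [hφ, hφ] at h
    nth_rw 1 [← h]
    simp [sq, mul_assoc, hu]
  rcases eq_re_or_re_eq_zero_of_sq_eq_re (eq_re_of_forall_mul_comm hcentral) with hreal | hpure
  · refine .inl fun q => ?_
    rw [hφ, hreal, mul_assoc, ← (coe_commute _ q).eq, ← mul_assoc, ← hreal, inv_mul_cancel₀ hu,
      one_mul]
  · refine .inr ⟨‖u‖⁻¹ • u, by simp [hpure], sq_inv_norm_smul_eq_neg_one hpure hu, fun q => ?_⟩
    rw [inv_smul_mul_mul_smul (inv_ne_zero (norm_ne_zero_iff.mpr hu)), hφ]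
end

section
/- Two n×n quaternion matrices A and B are i-consimilar (i.e., there exists an invertible quaternion matrix S with (-i S⁻¹ i) A S = B, where -i S⁻¹ i means applying the automorphism h ↦ -ihi entrywise to S⁻¹) if and only if the matrices iA and iB are similar over ℍ. -/
/-!
Left multiplication by `i` intertwines the twisted action with ordinary similarity: since
`i · (-i t i) = t i` entrywise, `i (φ(T) A S) = T (i A) S`. As `i` is a unit, `φ(T) A S = B` is
therefore equivalent to `T (i A) S = i B`, with the same pair `S, T`.
-/

open Quaternion

noncomputable def qi : ℍ[ℝ] := ⟨0, 1, 0, 0⟩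

/-- Entrywise application of the involutive automorphism `h ↦ -ihi`. -/
noncomputable def phiM {n : ℕ} (M : Matrix (Fin n) (Fin n) ℍ[ℝ]) :
    Matrix (Fin n) (Fin n) ℍ[ℝ] := M.map fun h => -(qi * h * qi)

/-- Similarity of quaternion matrices: `B = S⁻¹ A S` for invertible `S`. -/
def QSimilar {n : ℕ} (A B : Matrix (Fin n) (Fin n) ℍ[ℝ]) : Prop :=
  ∃ S T : Matrix (Fin n) (Fin n) ℍ[ℝ], S * T = 1 ∧ T * S = 1 ∧ T * A * S = B

namespace Matrix

variable {R : Type*} [Semiring R] {l m n : Type*}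

theorem op_smul_mul_eq_mul_smul [Fintype m] (a : R) (M : Matrix l m R) (N : Matrix m n R) :
    MulOpposite.op a • M * N = M * (a • N) := by
  classical
  rw [op_smul_eq_mul_diagonal, smul_eq_diagonal_mul, Matrix.mul_assoc]

theorem smul_map_conj {u v : R} (h : u * v = 1) (M : Matrix l m R) :
    u • M.map (fun x => v * x * u) = MulOpposite.op u • M := by
  ext
  simp [← mul_assoc, h]

end Matrix

theorem qi_mul_qi : qi * qi = -1 := by
  ext <;> simp only [re_mul, imI_mul, imJ_mul, imK_mul] <;> simp [qi]

theorem qi_mul_neg_qi : qi * -qi = 1 := by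
  rw [mul_neg, qi_mul_qi, neg_neg]

theorem isUnit_qi : IsUnit qi :=
  .of_mul_eq_one _ qi_mul_neg_qi

theorem phiM_eq_map_conj {n : ℕ} (M : Matrix (Fin n) (Fin n) ℍ[ℝ]) :
    phiM M = M.map (fun x => -qi * x * qi) := by
  simp [phiM]

theorem qi_smul_phiM_mul_mul {n : ℕ} (T A S : Matrix (Fin n) (Fin n) ℍ[ℝ]) :
    qi • (phiM T * A * S) = T * (qi • A) * S := by
  have hconj : qi • phiM T = MulOpposite.op qi • T :=
    phiM_eq_map_conj T ▸ Matrix.smul_map_conj qi_mul_neg_qi T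
  rw [← Matrix.smul_mul, ← Matrix.smul_mul, hconj, Matrix.op_smul_mul_eq_mul_smul]

theorem iConsimilar_iff_iA_similar_iB {n : ℕ}
    (A B : Matrix (Fin n) (Fin n) ℍ[ℝ]) :
    (∃ S T : Matrix (Fin n) (Fin n) ℍ[ℝ],
        S * T = 1 ∧ T * S = 1 ∧ phiM T * A * S = B) ↔
      QSimilar (A.map fun x => qi * x) (B.map fun x => qi * x) := by
  change _ ↔ QSimilar (qi • A) (qi • B)
  simp only [QSimilar, ← qi_smul_phiM_mul_mul, isUnit_qi.smul_left_cancel]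
end
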